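/- Let a ≥ 1 be an odd integer and let n ≥ 1 be an integer. Then (n^a − (n−1)^a) mod 10 ∈ {1, 7, 9}; in particular the value n^a − (n−1)^a never ends in the decimal digit 3. -/
import Mathlib

lemma pow5_mod10 (x : ℕ) : x ^ 5 % 10 = x % 10 := by
  conv_lhs => rw [Nat.pow_mod]
  have h : x % 10 < 10 := Nat.mod_lt _ (by norm_num)
  set m := x % 10 with hm
  interval_cases m <;> rfl

lemma pow_add4_mod10 (x a : ℕ) (ha : 1 ≤ a) :
    x ^ (a + 4) % 10 = x ^ a % 10 := by
  obtain ⟨b, rb⟩ := Nat.exists_eq_add_of_le ha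
  subst rb
  have h1 : x ^ (1 + b + 4) = x ^ b * x ^ 5 := by ring
  rw [h1, Nat.mul_mod, pow5_mod10, ← Nat.mul_mod]
  have h2 : x ^ b * x = x ^ (1 + b) := by ring
  rw [h2]

lemma pow_mod10_reduce (x : ℕ) : ∀ a : ℕ, a % 4 = 1 ∨ a % 4 = 3 →
    x ^ a % 10 = x ^ (a % 4) % 10 := by
  intro a
  induction a using Nat.strong_induction_on with
  | _ a ih =>
    intro h
    by_cases hlt : a < 4
    · rw [Nat.mod_eq_of_lt hlt]
    · push_neg at hlt
      obtain ⟨b, rb⟩ : ∃ b, a = b + 4 := ⟨a - 4, by omega⟩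
      subst rb
      have hb1 : 1 ≤ b := by omega
      have hb : b % 4 = 1 ∨ b % 4 = 3 := by omega
      rw [pow_add4_mod10 x b hb1, ih b (by omega) hb]
      congr 2
      omega

lemma digit_helper1 : ∀ u < 10, ∀ v < 10,
    ((u = 0 ∧ v = 9) ∨ v + 1 = u) →
    (u ^ 1 % 10 + 10 - v ^ 1 % 10) % 10 = 1 ∨
    (u ^ 1 % 10 + 10 - v ^ 1 % 10) % 10 = 7 ∨
    (u ^ 1 % 10 + 10 - v ^ 1 % 10) % 10 = 9 := by decide

lemma digit_helper3 : ∀ u < 10, ∀ v < 10,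
    ((u = 0 ∧ v = 9) ∨ v + 1 = u) →
    (u ^ 3 % 10 + 10 - v ^ 3 % 10) % 10 = 1 ∨
    (u ^ 3 % 10 + 10 - v ^ 3 % 10) % 10 = 7 ∨
    (u ^ 3 % 10 + 10 - v ^ 3 % 10) % 10 = 9 := by decide

/-- Last-digit pattern (paper's Fig. 6): for an odd exponent `a ≥ 1` and `n ≥ 1`,
the shell value `n^a - (n-1)^a` ends in the decimal digit `1`, `7`, or `9`;
in particular it never ends in `3`. -/
theorem shell_last_digit_of_odd_exponent
    (a n : ℕ) (ha1 : 1 ≤ a) (haodd : Odd a) (hn : 1 ≤ n) :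
    (n ^ a - (n - 1) ^ a) % 10 = 1 ∨
    (n ^ a - (n - 1) ^ a) % 10 = 7 ∨
    (n ^ a - (n - 1) ^ a) % 10 = 9 := by
  have h2 : a % 2 = 1 := Nat.odd_iff.mp haodd
  have hr : a % 4 = 1 ∨ a % 4 = 3 := by omega
  have hx : n ^ a % 10 = (n % 10) ^ (a % 4) % 10 := by
    rw [pow_mod10_reduce n a hr, Nat.pow_mod]
  have hy : (n - 1) ^ a % 10 = ((n - 1) % 10) ^ (a % 4) % 10 := by
    rw [pow_mod10_reduce (n - 1) a hr, Nat.pow_mod]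
  have hle : (n - 1) ^ a ≤ n ^ a := Nat.pow_le_pow_left (Nat.sub_le n 1) a
  have hu : n % 10 < 10 := Nat.mod_lt _ (by norm_num)
  have hv : (n - 1) % 10 < 10 := Nat.mod_lt _ (by norm_num)
  have hrel : ((n % 10 = 0 ∧ (n - 1) % 10 = 9) ∨ (n - 1) % 10 + 1 = n % 10) := by
    omega
  rcases hr with hr | hr <;> rw [hr] at hx hy
  · have := digit_helper1 (n % 10) hu ((n - 1) % 10) hv hrel
    omega
  · have := digit_helper3 (n % 10) hu ((n - 1) % 10) hv hrel
    omega
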